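/- arXiv:2109.06024 — 3 statements merged into one kernel-verified Lean document; each statement's English description precedes it below -/
import Mathlib

section
/- Let ρ_0 and ρ_1 be mixtures of the same two components with mixing weights α_0 > α_1 on component 1 (so weights 1-α_0 < 1-α_1 on component 0, with 1-α_0 > 0). Then D_KL(ρ_1 ‖ ρ_0) ≤ log((1-α_1)/(1-α_0)). -/
/-!
Since `α₁ ≤ α₀`, the mixture `ρ₁` is dominated pointwise by `c • ρ₀` with
`c = (1 - α₁) / (1 - α₀)`: the weight on `p(·|0)` matches exactly and the weight on `p(·|1)`
only grows. Hence `log (ρ₁ / ρ₀) ≤ log c` wherever `ρ₁ > 0`, and integrating against the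
probability density `ρ₁` gives the bound.
-/

open MeasureTheory Real

lemma mul_log_div_le_mul_log_of_le_mul {a b c : ℝ} (hc : 0 < c) (ha : 0 ≤ a)
    (hab : a ≤ c * b) : a * log (a / b) ≤ a * log c := by
  rcases ha.eq_or_lt with rfl | ha
  · simp
  have hb : 0 < b := pos_of_mul_pos_right (ha.trans_le hab) hc.le
  exact mul_le_mul_of_nonneg_left
    (log_le_log (div_pos ha hb) ((div_le_iff₀ hb).2 hab)) ha.le

lemma mixture_le_mul_mixture {α₀ α₁ u v : ℝ} (hlt : α₁ ≤ α₀) (hα₀ : α₀ < 1) (hv : 0 ≤ v) :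
    (1 - α₁) * u + α₁ * v ≤ (1 - α₁) / (1 - α₀) * ((1 - α₀) * u + α₀ * v) := by
  have h₀ : 0 < 1 - α₀ := by linarith
  rw [div_mul_eq_mul_div, le_div_iff₀ h₀]
  nlinarith

section

variable {X : Type*} [MeasurableSpace X] {μ : Measure X}

lemma integral_mixture {p₀ p₁ : X → ℝ} (h₀ : ∫ x, p₀ x ∂μ = 1) (h₁ : ∫ x, p₁ x ∂μ = 1)
    (α : ℝ) : ∫ x, (1 - α) * p₀ x + α * p₁ x ∂μ = 1 := by
  have hp₀ : Integrable p₀ μ := Integrable.of_integral_ne_zero (by simp [h₀])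
  have hp₁ : Integrable p₁ μ := Integrable.of_integral_ne_zero (by simp [h₁])
  rw [integral_add (hp₀.const_mul _) (hp₁.const_mul _), integral_const_mul,
    integral_const_mul, h₀, h₁]
  ring

lemma integral_mul_log_div_le_of_le_mul {f g : X → ℝ} {c : ℝ} (hc : 0 < c)
    (hf : ∀ᵐ x ∂μ, 0 ≤ f x) (hfg : ∀ᵐ x ∂μ, f x ≤ c * g x) (hf_int : ∫ x, f x ∂μ = 1)
    (h_int : Integrable (fun x => f x * log (f x / g x)) μ) :
    ∫ x, f x * log (f x / g x) ∂μ ≤ log c := calc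
  ∫ x, f x * log (f x / g x) ∂μ ≤ ∫ x, f x * log c ∂μ := by
    refine integral_mono_ae h_int
      ((Integrable.of_integral_ne_zero (by simp [hf_int])).mul_const _) ?_
    filter_upwards [hf, hfg] with x hfx hfgx
    exact mul_log_div_le_mul_log_of_le_mul hc hfx hfgx
  _ = log c := by rw [integral_mul_const, hf_int, one_mul]

end

/-- For two mixtures ρ_b = (1-α_b)p(·|0) + α_b p(·|1) of the same pair of
probability densities with α_0 > α_1 and 1 - α_0 > 0, the reverse KL divergence
D_KL(ρ_1 ‖ ρ_0) is at most log((1-α_1)/(1-α_0)). -/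
theorem kl_mixture_reverse_le_log_ratio {X : Type*} [MeasurableSpace X] (μ : Measure X)
    (p0 p1 : X → ℝ)
    (hp0 : ∀ x, 0 ≤ p0 x) (hp1 : ∀ x, 0 ≤ p1 x)
    (hint0 : ∫ x, p0 x ∂μ = 1) (hint1 : ∫ x, p1 x ∂μ = 1)
    (α0 α1 : ℝ) (hα1 : 0 ≤ α1) (hlt : α1 < α0) (hα0 : α0 < 1)
    (ρ0 ρ1 : X → ℝ)
    (hρ0 : ∀ x, ρ0 x = (1 - α0) * p0 x + α0 * p1 x)
    (hρ1 : ∀ x, ρ1 x = (1 - α1) * p0 x + α1 * p1 x)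
    (hInt : Integrable (fun x => ρ1 x * Real.log (ρ1 x / ρ0 x)) μ) :
    ∫ x, ρ1 x * Real.log (ρ1 x / ρ0 x) ∂μ ≤ Real.log ((1 - α1) / (1 - α0)) := by
  obtain rfl : ρ0 = fun x => (1 - α0) * p0 x + α0 * p1 x := funext hρ0
  obtain rfl : ρ1 = fun x => (1 - α1) * p0 x + α1 * p1 x := funext hρ1
  refine integral_mul_log_div_le_of_le_mul (div_pos (by linarith) (by linarith))
    (.of_forall fun x => ?_) (.of_forall fun x => mixture_le_mul_mixture hlt.le hα0 (hp1 x))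
    (integral_mixture hint0 hint1 α1) hInt
  exact add_nonneg (mul_nonneg (by linarith) (hp0 x)) (mul_nonneg hα1 (hp1 x))
end

section
/- For probability measures P and Q, the total variation distance satisfies δ(P,Q) ≤ sqrt(1 - exp(-D_KL(P‖Q))) (Bretagnolle–Huber inequality). -/
/-!
Write `f = dP/dQ`. The overlap `m = ∫ min f 1 dQ` controls the total variation distance,
`δ(P, Q) ≤ 1 - m`, since `P A - Q A = ∫_A (f - 1) dQ`. Cauchy–Schwarz applied to
`√f = √(min f 1) · √(max f 1)` bounds the Bhattacharyya coefficient `B = ∫ √f dQ` by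
`B² ≤ m (2 - m) = 1 - (1 - m)²`, and Jensen's inequality for `exp` under `P` gives
`exp (-D_KL(P‖Q) / 2) ≤ ∫ f^(-1/2) dP = B`. Hence `(1 - m)² ≤ 1 - exp (-D_KL(P‖Q))`.
-/

open MeasureTheory

/-- Total variation distance between two measures. -/
noncomputable def tvDist {Ω : Type*} [MeasurableSpace Ω] (P Q : Measure Ω) : ℝ :=
  ⨆ A : {A : Set Ω // MeasurableSet A}, |(P A.1).toReal - (Q A.1).toReal|

/-- Kullback–Leibler divergence D_KL(P ‖ Q) = ∫ log (dP/dQ) dP (for P ≪ Q). -/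
noncomputable def klDiv {Ω : Type*} [MeasurableSpace Ω] (P Q : Measure Ω) : ℝ :=
  ∫ x, Real.log ((P.rnDeriv Q x).toReal) ∂P

noncomputable def overlap {Ω : Type*} [MeasurableSpace Ω] (P Q : Measure Ω) : ℝ :=
  ∫ x, min (P.rnDeriv Q x).toReal 1 ∂Q

noncomputable def bhattacharyyaCoeff {Ω : Type*} [MeasurableSpace Ω] (P Q : Measure Ω) : ℝ :=
  ∫ x, √(P.rnDeriv Q x).toReal ∂Q

section Integral

variable {α : Type*} [MeasurableSpace α] {μ : Measure α}

lemma setIntegral_le_integral_of_le_of_nonneg {g φ : α → ℝ} (hg : Integrable g μ)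
    (hφ : Integrable φ μ) (hgφ : g ≤ φ) (hφ0 : 0 ≤ φ) (s : Set α) :
    ∫ x in s, g x ∂μ ≤ ∫ x, φ x ∂μ :=
  (setIntegral_mono hg.integrableOn hφ.integrableOn hgφ).trans
    (setIntegral_le_integral hφ (Filter.Eventually.of_forall hφ0))

lemma memLp_two_sqrt {g : α → ℝ} (hg : Integrable g μ) (hg0 : 0 ≤ g) :
    MemLp (fun x => √(g x)) 2 μ := by
  rw [memLp_two_iff_integrable_sq (Real.continuous_sqrt.comp_aestronglyMeasurable hg.1)]
  simpa only [Real.sq_sqrt (hg0 _)] using hg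

lemma sq_integral_sqrt_mul_le {g h : α → ℝ} (hg : Integrable g μ) (hh : Integrable h μ)
    (hg0 : 0 ≤ g) (hh0 : 0 ≤ h) :
    (∫ x, √(g x * h x) ∂μ) ^ 2 ≤ (∫ x, g x ∂μ) * ∫ x, h x ∂μ := by
  have holder := integral_mul_le_Lp_mul_Lq_of_nonneg Real.HolderConjugate.two_two
    (Filter.Eventually.of_forall fun x => Real.sqrt_nonneg (g x))
    (Filter.Eventually.of_forall fun x => Real.sqrt_nonneg (h x))
    (by simpa using memLp_two_sqrt hg hg0) (by simpa using memLp_two_sqrt hh hh0)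
  simp only [Real.rpow_two, Real.sq_sqrt (hg0 _), Real.sq_sqrt (hh0 _), ← Real.sqrt_eq_rpow,
    ← Real.sqrt_mul (hg0 _)] at holder
  calc (∫ x, √(g x * h x) ∂μ) ^ 2 ≤ (√(∫ x, g x ∂μ) * √(∫ x, h x ∂μ)) ^ 2 :=
        pow_le_pow_left₀ (integral_nonneg fun x => Real.sqrt_nonneg _) holder 2
    _ = (∫ x, g x ∂μ) * ∫ x, h x ∂μ := by
        rw [mul_pow, Real.sq_sqrt (integral_nonneg hg0), Real.sq_sqrt (integral_nonneg hh0)]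

end Integral

lemma Real.mul_exp_neg_half_log {y : ℝ} (hy : 0 ≤ y) : y * Real.exp (-(Real.log y / 2)) = √y := by
  rcases hy.eq_or_lt with rfl | hy
  · simp
  rw [← Real.log_sqrt hy.le, Real.exp_neg, Real.exp_log (Real.sqrt_pos.2 hy)]
  nth_rw 1 [← Real.mul_self_sqrt hy.le]
  field_simp [(Real.sqrt_pos.2 hy).ne']

section RadonNikodym

variable {Ω : Type*} [MeasurableSpace Ω] {P Q : Measure Ω}

lemma integrable_min_toReal_rnDeriv_one [IsFiniteMeasure P] [IsFiniteMeasure Q] :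
    Integrable (fun x => min (P.rnDeriv Q x).toReal 1) Q :=
  Measure.integrable_toReal_rnDeriv.inf (integrable_const 1)

lemma integrable_max_toReal_rnDeriv_one [IsFiniteMeasure P] [IsFiniteMeasure Q] :
    Integrable (fun x => max (P.rnDeriv Q x).toReal 1) Q :=
  Measure.integrable_toReal_rnDeriv.sup (integrable_const 1)

lemma integrable_sqrt_toReal_rnDeriv [IsFiniteMeasure P] [IsFiniteMeasure Q] :
    Integrable (fun x => √(P.rnDeriv Q x).toReal) Q :=
  (memLp_two_sqrt Measure.integrable_toReal_rnDeriv fun _ => ENNReal.toReal_nonneg).integrable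
    one_le_two

variable [IsProbabilityMeasure P] [IsProbabilityMeasure Q]

lemma integral_toReal_rnDeriv_of_isProbabilityMeasure (hac : P ≪ Q) :
    ∫ x, (P.rnDeriv Q x).toReal ∂Q = 1 := by
  rw [Measure.integral_toReal_rnDeriv hac, probReal_univ]

lemma toReal_sub_toReal_le_one_sub_overlap (hac : P ≪ Q) (A : Set Ω) :
    (P A).toReal - (Q A).toReal ≤ 1 - overlap P Q := by
  calc (P A).toReal - (Q A).toReal = ∫ x in A, ((P.rnDeriv Q x).toReal - 1) ∂Q := by
        rw [integral_sub Measure.integrable_toReal_rnDeriv.integrableOn (integrable_const _),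
          Measure.setIntegral_toReal_rnDeriv hac, setIntegral_const, smul_eq_mul, mul_one,
          measureReal_def, measureReal_def]
    _ ≤ ∫ x, ((P.rnDeriv Q x).toReal - min (P.rnDeriv Q x).toReal 1) ∂Q :=
        setIntegral_le_integral_of_le_of_nonneg
          (Measure.integrable_toReal_rnDeriv.sub (integrable_const 1))
          (Measure.integrable_toReal_rnDeriv.sub integrable_min_toReal_rnDeriv_one)
          (fun x => sub_le_sub_left (min_le_right _ _) _)
          (fun x => sub_nonneg.2 (min_le_left _ _)) A
    _ = 1 - overlap P Q := by
        rw [integral_sub Measure.integrable_toReal_rnDeriv integrable_min_toReal_rnDeriv_one,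
          integral_toReal_rnDeriv_of_isProbabilityMeasure hac, overlap]

lemma toReal_sub_toReal_le_one_sub_overlap' (hac : P ≪ Q) (A : Set Ω) :
    (Q A).toReal - (P A).toReal ≤ 1 - overlap P Q := by
  calc (Q A).toReal - (P A).toReal = ∫ x in A, (1 - (P.rnDeriv Q x).toReal) ∂Q := by
        rw [integral_sub (integrable_const _) Measure.integrable_toReal_rnDeriv.integrableOn,
          Measure.setIntegral_toReal_rnDeriv hac, setIntegral_const, smul_eq_mul, mul_one,
          measureReal_def, measureReal_def]
    _ ≤ ∫ x, (1 - min (P.rnDeriv Q x).toReal 1) ∂Q :=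
        setIntegral_le_integral_of_le_of_nonneg
          ((integrable_const 1).sub Measure.integrable_toReal_rnDeriv)
          ((integrable_const 1).sub integrable_min_toReal_rnDeriv_one)
          (fun x => sub_le_sub_left (min_le_left _ _) _)
          (fun x => sub_nonneg.2 (min_le_right _ _)) A
    _ = 1 - overlap P Q := by
        rw [integral_sub (integrable_const 1) integrable_min_toReal_rnDeriv_one, overlap,
          integral_const, probReal_univ, smul_eq_mul, mul_one]

lemma tvDist_le_one_sub_overlap (hac : P ≪ Q) : tvDist P Q ≤ 1 - overlap P Q :=
  ciSup_le fun A => abs_sub_le_iff.2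
    ⟨toReal_sub_toReal_le_one_sub_overlap hac A, toReal_sub_toReal_le_one_sub_overlap' hac A⟩

lemma integral_max_toReal_rnDeriv_one (hac : P ≪ Q) :
    ∫ x, max (P.rnDeriv Q x).toReal 1 ∂Q = 2 - overlap P Q := by
  have hsum : ∫ x, (min (P.rnDeriv Q x).toReal 1 + max (P.rnDeriv Q x).toReal 1) ∂Q = 2 := by
    simp_rw [min_add_max]
    rw [integral_add Measure.integrable_toReal_rnDeriv (integrable_const 1),
      integral_toReal_rnDeriv_of_isProbabilityMeasure hac, integral_const, probReal_univ]
    norm_num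
  rw [integral_add integrable_min_toReal_rnDeriv_one integrable_max_toReal_rnDeriv_one] at hsum
  rw [overlap]
  linarith

lemma sq_bhattacharyyaCoeff_le (hac : P ≪ Q) :
    bhattacharyyaCoeff P Q ^ 2 ≤ overlap P Q * (2 - overlap P Q) := by
  have hsplit : ∀ x, √(P.rnDeriv Q x).toReal =
      √(min (P.rnDeriv Q x).toReal 1 * max (P.rnDeriv Q x).toReal 1) := fun x => by
    rw [min_mul_max, mul_one]
  rw [bhattacharyyaCoeff, ← integral_max_toReal_rnDeriv_one hac, overlap]
  simp_rw [hsplit]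
  exact sq_integral_sqrt_mul_le integrable_min_toReal_rnDeriv_one
    integrable_max_toReal_rnDeriv_one (fun x => le_min ENNReal.toReal_nonneg zero_le_one)
    (fun x => le_max_of_le_right zero_le_one)

lemma exp_neg_half_klDiv_le_bhattacharyyaCoeff (hac : P ≪ Q)
    (hInt : Integrable (fun x => Real.log (P.rnDeriv Q x).toReal) P) :
    Real.exp (-(klDiv P Q / 2)) ≤ bhattacharyyaCoeff P Q := by
  have hsqrt : ∀ x, (P.rnDeriv Q x).toReal • Real.exp (-(Real.log (P.rnDeriv Q x).toReal / 2)) =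
      √(P.rnDeriv Q x).toReal := fun x => Real.mul_exp_neg_half_log ENNReal.toReal_nonneg
  have hexp : Integrable (fun x => Real.exp (-(Real.log (P.rnDeriv Q x).toReal / 2))) P := by
    rw [← integrable_rnDeriv_smul_iff hac]
    simpa only [hsqrt] using integrable_sqrt_toReal_rnDeriv
  calc Real.exp (-(klDiv P Q / 2))
      = Real.exp (∫ x, -(Real.log (P.rnDeriv Q x).toReal / 2) ∂P) := by
        rw [integral_neg, integral_div, klDiv]
    _ ≤ ∫ x, Real.exp (-(Real.log (P.rnDeriv Q x).toReal / 2)) ∂P :=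
        convexOn_exp.map_integral_le Real.continuous_exp.continuousOn isClosed_univ
          (Filter.Eventually.of_forall fun _ => Set.mem_univ _) (hInt.div_const 2).neg hexp
    _ = bhattacharyyaCoeff P Q := by
        rw [← integral_rnDeriv_smul hac]
        simp only [hsqrt, bhattacharyyaCoeff]

end RadonNikodym

/-- Bretagnolle–Huber inequality: δ(P,Q) ≤ √(1 - exp(-D_KL(P‖Q))). -/
theorem bretagnolle_huber {Ω : Type*} [MeasurableSpace Ω]
    (P Q : Measure Ω) [IsProbabilityMeasure P] [IsProbabilityMeasure Q]
    (hac : P ≪ Q)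
    (hInt : Integrable (fun x => Real.log ((P.rnDeriv Q x).toReal)) P) :
    tvDist P Q ≤ Real.sqrt (1 - Real.exp (-(klDiv P Q))) := by
  have hexp : Real.exp (-(klDiv P Q)) ≤ overlap P Q * (2 - overlap P Q) :=
    calc Real.exp (-(klDiv P Q)) = Real.exp (-(klDiv P Q / 2)) ^ 2 := by
          rw [← Real.exp_nat_mul]; ring_nf
      _ ≤ bhattacharyyaCoeff P Q ^ 2 :=
          pow_le_pow_left₀ (Real.exp_nonneg _)
            (exp_neg_half_klDiv_le_bhattacharyyaCoeff hac hInt) 2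
      _ ≤ overlap P Q * (2 - overlap P Q) := sq_bhattacharyyaCoeff_le hac
  calc tvDist P Q ≤ 1 - overlap P Q := tvDist_le_one_sub_overlap hac
    _ ≤ Real.sqrt (1 - Real.exp (-(klDiv P Q))) :=
        (le_abs_self _).trans (Real.abs_le_sqrt (by nlinarith))
end

section
/- Let α_0, α_1 ∈ (0,1) with α_0 ≠ α_1, and let P_b be the Bernoulli-type mixture with weight α_b as above. Then the accuracy of any test distinguishing P_0^n from P_1^n (under a uniform prior) is at most 1/2 + (1/2)·min{ sqrt(1 - (m/M)^n), sqrt(1 - ((1-M)/(1-m))^n) }, where m = min(α_0,α_1) and M = max(α_0,α_1). -/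
/-!
Compare the weights of the two components: `(m / M) • P_M ≤ P_m` and
`((1 - M) / (1 - m)) • P_m ≤ P_M` as measures. Domination `c • P ≤ Q` passes to `n`-fold
products with constant `c ^ n`, and between probability measures it bounds the total variation
distance by `1 - c`. This gives the accuracy bound with `1 - c ^ n ≤ √(1 - c ^ n)` in place of
the square root.
-/

open MeasureTheory NNReal

namespace MeasureTheory.Measure

variable {ι : Type*} [Fintype ι] {α : ι → Type*} [∀ i, MeasurableSpace (α i)]

theorem pi_mono {μ ν : ∀ i, Measure (α i)} (h : ∀ i, μ i ≤ ν i) :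
    Measure.pi μ ≤ Measure.pi ν := by
  have hle : OuterMeasure.pi (fun i => (μ i).toOuterMeasure)
      ≤ OuterMeasure.pi fun i => (ν i).toOuterMeasure :=
    OuterMeasure.le_pi.2 fun s _ =>
      (OuterMeasure.pi_pi_le _ s).trans (Finset.prod_le_prod' fun i _ => h i _)
  refine Measure.le_iff.2 fun t ht => ?_
  rw [Measure.pi_def, Measure.pi_def, toMeasure_apply _ _ ht, toMeasure_apply _ _ ht]
  exact hle t

theorem pi_smul (μ : ∀ i, Measure (α i)) [∀ i, SigmaFinite (μ i)] (c : ι → ℝ≥0) :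
    Measure.pi (fun i => c i • μ i) = (∏ i, c i) • Measure.pi μ := by
  refine Measure.pi_eq fun s _ => ?_
  simp only [Measure.smul_apply, Measure.pi_pi, ENNReal.smul_def, smul_eq_mul,
    ENNReal.ofNNReal_finsetProd, Finset.prod_mul_distrib]

end MeasureTheory.Measure

section Domination

variable {X : Type*} [MeasurableSpace X] {P Q : Measure X} {c : ℝ≥0}

theorem smul_pi_le_pi (ι : Type*) [Fintype ι] [SigmaFinite P] (h : c • P ≤ Q) :
    c ^ Fintype.card ι • Measure.pi (fun _ : ι => P) ≤ Measure.pi fun _ : ι => Q := by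
  simpa [Measure.pi_smul] using Measure.pi_mono fun _ : ι => h

variable [IsProbabilityMeasure P] [IsProbabilityMeasure Q]

theorem real_sub_real_le_of_smul_le (h : c • P ≤ Q) (s : Set X) :
    P.real s - Q.real s ≤ 1 - c := by
  have hs : c * P.real s ≤ Q.real s := by
    simpa [Measure.real, ENNReal.toReal_mul] using
      ENNReal.toReal_mono (measure_ne_top Q s) (h s)
  have hc : (c : ℝ) ≤ 1 := by
    simpa [Measure.real, ENNReal.toReal_mul] using
      ENNReal.toReal_mono (measure_ne_top Q _) (h Set.univ)
  nlinarith [measureReal_nonneg (μ := P) (s := s), measureReal_le_one (μ := P) (s := s)]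

theorem abs_real_sub_real_le_of_smul_le (h : c • P ≤ Q) {s : Set X} (hs : MeasurableSet s) :
    |P.real s - Q.real s| ≤ 1 - c := by
  refine abs_sub_le_iff.2 ⟨real_sub_real_le_of_smul_le h s, ?_⟩
  have := real_sub_real_le_of_smul_le h sᶜ
  rw [probReal_compl_eq_one_sub hs, probReal_compl_eq_one_sub hs] at this
  linarith

theorem abs_real_pi_sub_real_pi_le_of_smul_le (ι : Type*) [Fintype ι] (h : c • P ≤ Q)
    {s : Set (ι → X)} (hs : MeasurableSet s) :
    |(Measure.pi fun _ : ι => P).real s - (Measure.pi fun _ : ι => Q).real s|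
      ≤ 1 - c ^ Fintype.card ι := by
  simpa using abs_real_sub_real_le_of_smul_le (smul_pi_le_pi ι h) hs

theorem smul_withDensity_ofReal_le (μ : Measure X) {f g : X → ℝ} (h : ∀ x, c * g x ≤ f x) :
    c • μ.withDensity (fun x => ENNReal.ofReal (g x))
      ≤ μ.withDensity fun x => ENNReal.ofReal (f x) := by
  rw [ENNReal.smul_def, ← withDensity_smul' _ _ ENNReal.coe_ne_top]
  refine withDensity_mono (.of_forall fun x => ?_)
  simpa [← ENNReal.ofReal_coe_nnreal, ← ENNReal.ofReal_mul] using ENNReal.ofReal_le_ofReal (h x)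

end Domination

theorem div_mul_convex_comb_le {a b α β : ℝ} (ha : 0 ≤ a) (hα : 0 ≤ α)
    (hαβ : α ≤ β) : α / β * ((1 - β) * a + β * b) ≤ (1 - α) * a + α * b := by
  rcases (hα.trans hαβ).eq_or_lt with rfl | hβ
  · simp [le_antisymm hαβ hα, ha]
  have hcoef : α / β * (1 - β) ≤ 1 - α := by
    rw [div_mul_eq_mul_div, div_le_iff₀ hβ]; nlinarith
  calc α / β * ((1 - β) * a + β * b) = α / β * (1 - β) * a + α * b := by field_simp
    _ ≤ (1 - α) * a + α * b := by gcongr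

theorem one_sub_div_one_sub_mul_convex_comb_le {a b α β : ℝ} (hb : 0 ≤ b)
    (hαβ : α ≤ β) (hβ : β ≤ 1) :
    (1 - β) / (1 - α) * ((1 - α) * a + α * b) ≤ (1 - β) * a + β * b := by
  have := div_mul_convex_comb_le (a := b) (b := a) hb (sub_nonneg.2 hβ) (sub_le_sub_left hαβ 1)
  convert this using 1 <;> ring

section Mixture

variable {X : Type*} [MeasurableSpace X]

noncomputable def mixtureMeasure (μ : Measure X) (p₀ p₁ : X → ℝ) (α : ℝ) : Measure X :=
  μ.withDensity fun x => ENNReal.ofReal ((1 - α) * p₀ x + α * p₁ x)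

variable (μ : Measure X) {p₀ p₁ : X → ℝ} {α β : ℝ}

theorem smul_mixtureMeasure_le_of_le (hp₀ : ∀ x, 0 ≤ p₀ x) (hα : 0 ≤ α) (hαβ : α ≤ β) :
    (α / β).toNNReal • mixtureMeasure μ p₀ p₁ β ≤ mixtureMeasure μ p₀ p₁ α :=
  smul_withDensity_ofReal_le μ fun x => by
    rw [Real.coe_toNNReal _ (div_nonneg hα (hα.trans hαβ))]
    exact div_mul_convex_comb_le (hp₀ x) hα hαβ

theorem smul_mixtureMeasure_le_of_le' (hp₁ : ∀ x, 0 ≤ p₁ x) (hαβ : α ≤ β) (hβ : β ≤ 1) :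
    ((1 - β) / (1 - α)).toNNReal • mixtureMeasure μ p₀ p₁ α ≤ mixtureMeasure μ p₀ p₁ β :=
  smul_withDensity_ofReal_le μ fun x => by
    rw [Real.coe_toNNReal _ (div_nonneg (by linarith) (by linarith))]
    exact one_sub_div_one_sub_mul_convex_comb_le (hp₁ x) hαβ hβ

theorem smul_mixtureMeasure_le_or_le (hp₀ : ∀ x, 0 ≤ p₀ x) (hp₁ : ∀ x, 0 ≤ p₁ x)
    (hα : α ∈ Set.Icc (0 : ℝ) 1) (hβ : β ∈ Set.Icc (0 : ℝ) 1) :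
    ((min α β / max α β).toNNReal • mixtureMeasure μ p₀ p₁ α ≤ mixtureMeasure μ p₀ p₁ β ∨
        (min α β / max α β).toNNReal • mixtureMeasure μ p₀ p₁ β ≤ mixtureMeasure μ p₀ p₁ α) ∧
      (((1 - max α β) / (1 - min α β)).toNNReal • mixtureMeasure μ p₀ p₁ α
          ≤ mixtureMeasure μ p₀ p₁ β ∨
        ((1 - max α β) / (1 - min α β)).toNNReal • mixtureMeasure μ p₀ p₁ β
          ≤ mixtureMeasure μ p₀ p₁ α) := by
  rcases le_total α β with h | h
  · rw [min_eq_left h, max_eq_right h]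
    exact ⟨.inr (smul_mixtureMeasure_le_of_le μ hp₀ hα.1 h),
      .inl (smul_mixtureMeasure_le_of_le' μ hp₁ h hβ.2)⟩
  · rw [min_eq_right h, max_eq_left h]
    exact ⟨.inl (smul_mixtureMeasure_le_of_le μ hp₀ hβ.1 h),
      .inr (smul_mixtureMeasure_le_of_le' μ hp₁ h hα.2)⟩

end Mixture

theorem mixture_sample_accuracy_bound_general {X : Type*} [MeasurableSpace X] (μ : Measure X)
    (p0 p1 : X → ℝ)
    (hp0 : ∀ x, 0 ≤ p0 x) (hp1 : ∀ x, 0 ≤ p1 x)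
    (α0 α1 : ℝ) (hα0 : α0 ∈ Set.Ioo (0:ℝ) 1) (hα1 : α1 ∈ Set.Ioo (0:ℝ) 1)
    (ρ0 ρ1 : X → ℝ)
    (hρ0 : ∀ x, ρ0 x = (1 - α0) * p0 x + α0 * p1 x)
    (hρ1 : ∀ x, ρ1 x = (1 - α1) * p0 x + α1 * p1 x)
    (P0 P1 : Measure X) [IsProbabilityMeasure P0] [IsProbabilityMeasure P1]
    (hP0 : P0 = μ.withDensity fun x => ENNReal.ofReal (ρ0 x))
    (hP1 : P1 = μ.withDensity fun x => ENNReal.ofReal (ρ1 x))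
    (n : ℕ) (ψ : (Fin n → X) → Bool) (hψ : Measurable ψ) :
    (1 / 2) * (((Measure.pi fun _ : Fin n => P0) {v | ψ v = false}).toReal
        + ((Measure.pi fun _ : Fin n => P1) {v | ψ v = true}).toReal)
      ≤ 1 / 2 + (1 / 2) *
        min (Real.sqrt (1 - (min α0 α1 / max α0 α1) ^ n))
            (Real.sqrt (1 - ((1 - max α0 α1) / (1 - min α0 α1)) ^ n)) := by
  set Q0 := Measure.pi fun _ : Fin n => P0
  set Q1 := Measure.pi fun _ : Fin n => P1
  set A : Set (Fin n → X) := {v | ψ v = true}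
  have hA : MeasurableSet A := hψ (measurableSet_singleton true)
  have hbound : ∀ c : ℝ, 0 ≤ c → c.toNNReal • P0 ≤ P1 ∨ c.toNNReal • P1 ≤ P0 →
      Q1.real A - Q0.real A ≤ √(1 - c ^ n) := by
    intro c hc hdom
    refine (Real.le_sqrt_self_iff.2 (by simp; positivity)).trans' ?_
    rcases hdom with h | h
    · simpa [hc] using (neg_le_abs _).trans (abs_real_pi_sub_real_pi_le_of_smul_le (Fin n) h hA)
    · simpa [hc] using (le_abs_self _).trans (abs_real_pi_sub_real_pi_le_of_smul_le (Fin n) h hA)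
  have hP : mixtureMeasure μ p0 p1 α0 = P0 ∧ mixtureMeasure μ p0 p1 α1 = P1 := by
    simp only [hP0, hP1, hρ0, hρ1, mixtureMeasure, and_self]
  obtain ⟨hdom₁, hdom₂⟩ := hP.1 ▸ hP.2 ▸ smul_mixtureMeasure_le_or_le μ hp0 hp1
    (Set.Ioo_subset_Icc_self hα0) (Set.Ioo_subset_Icc_self hα1)
  have hcompl : {v : Fin n → X | ψ v = false} = Aᶜ := by ext; simp [A]
  rw [hcompl, ← measureReal_def, ← measureReal_def, probReal_compl_eq_one_sub hA]
  have hm : 0 ≤ min α0 α1 := le_min hα0.1.le hα1.1.le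
  have hM : max α0 α1 ≤ 1 := max_le hα0.2.le hα1.2.le
  have := le_min (hbound _ (div_nonneg hm (hm.trans min_le_max)) hdom₁)
    (hbound _ (div_nonneg (by linarith) (by linarith [min_le_max (a := α0) (b := α1)])) hdom₂)
  linarith

/-- Accuracy bound for distinguishing n i.i.d. samples of two mixtures of the
same pair of component densities with mixing weights α_0 ≠ α_1: any test ψ
under a uniform prior has accuracy at most
1/2 + (1/2)·min{√(1-(m/M)^n), √(1-((1-M)/(1-m))^n)} with m = min(α_0,α_1),
M = max(α_0,α_1). -/
theorem mixture_sample_accuracy_bound {X : Type*} [MeasurableSpace X] (μ : Measure X)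
    (p0 p1 : X → ℝ) (hm0 : Measurable p0) (hm1 : Measurable p1)
    (hp0 : ∀ x, 0 ≤ p0 x) (hp1 : ∀ x, 0 ≤ p1 x)
    (hint0 : ∫ x, p0 x ∂μ = 1) (hint1 : ∫ x, p1 x ∂μ = 1)
    (α0 α1 : ℝ) (hα0 : α0 ∈ Set.Ioo (0:ℝ) 1) (hα1 : α1 ∈ Set.Ioo (0:ℝ) 1)
    (hne : α0 ≠ α1)
    (ρ0 ρ1 : X → ℝ)
    (hρ0 : ∀ x, ρ0 x = (1 - α0) * p0 x + α0 * p1 x)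
    (hρ1 : ∀ x, ρ1 x = (1 - α1) * p0 x + α1 * p1 x)
    (P0 P1 : Measure X) [IsProbabilityMeasure P0] [IsProbabilityMeasure P1]
    (hP0 : P0 = μ.withDensity fun x => ENNReal.ofReal (ρ0 x))
    (hP1 : P1 = μ.withDensity fun x => ENNReal.ofReal (ρ1 x))
    (n : ℕ) (ψ : (Fin n → X) → Bool) (hψ : Measurable ψ) :
    (1 / 2) * (((Measure.pi fun _ : Fin n => P0) {v | ψ v = false}).toReal
        + ((Measure.pi fun _ : Fin n => P1) {v | ψ v = true}).toReal)
      ≤ 1 / 2 + (1 / 2) *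
        min (Real.sqrt (1 - (min α0 α1 / max α0 α1) ^ n))
            (Real.sqrt (1 - ((1 - max α0 α1) / (1 - min α0 α1)) ^ n)) :=
  mixture_sample_accuracy_bound_general μ p0 p1 hp0 hp1 α0 α1 hα0 hα1 ρ0 ρ1 hρ0 hρ1 P0 P1 hP0 hP1 n
    ψ hψ
end
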